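/- Let B ∈ ℝ^{m×n}, V ∈ ℝ^{n×p}, β ∈ (0,1], and suppose p_i ≥ β ‖B^{(i)}‖₂‖V_{(i)}‖₂ / (Σ_{i'} ‖B^{(i')}‖₂‖V_{(i')}‖₂) for all i, with Σ p_i = 1 and all ‖B^{(i)}‖₂‖V_{(i)}‖₂ > 0. Then for a sub-sampling matrix S with d columns, E[‖BV − B S Sᵀ V‖_F²] ≤ (1/(β d)) ‖B‖_F² ‖V‖_F². -/

import Mathlib

/-!
Entrywise, the sketched product `B S Sᵀ V` is a sum of `d` i.i.d. copies of the unbiased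
estimator `i ↦ B a i * V i b / (d * p i)` of `(B * V) a b / d`, so its expected squared error is
`d` times the variance of one copy. Summing over entries gives the exact formula
`E ‖BV - BSSᵀV‖_F² = (∑ i ‖B^{(i)}‖² ‖V_{(i)}‖² / p i - ‖BV‖_F²) / d`. Writing
`s i = ‖B^{(i)}‖ ‖V_{(i)}‖`, the quality condition gives `s i ^ 2 / p i ≤ s i * (∑ s) / β`, and
Cauchy–Schwarz bounds `(∑ s)²` by `‖B‖_F² ‖V‖_F²`.
-/

open Matrix BigOperators

/-- Sub-sampling sketching matrix determined by a choice of column indices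
`c : Fin d → Fin n`: the `k`-th column is `(1/√(d p (c k))) e_{c k}`. -/
noncomputable def subSampleMatrix (n d : ℕ) (p : Fin n → ℝ) (c : Fin d → Fin n) :
    Matrix (Fin n) (Fin d) ℝ :=
  fun i k => if c k = i then 1 / Real.sqrt (d * p i) else 0

/-- Squared Frobenius norm of a matrix. -/
def frobSq {m q : ℕ} (M : Matrix (Fin m) (Fin q) ℝ) : ℝ :=
  ∑ a, ∑ b, (M a b) ^ 2

open Finset

/- A sum over `c : κ → ι` weighted by `∏ j, p (c j)` is an expectation over `κ`-indexed
i.i.d. draws from the distribution `p`. -/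
section IidDraws

variable {ι κ : Type*} [Fintype ι] [Fintype κ] [DecidableEq κ] {p : ι → ℝ}

theorem sum_prod_mul_prod_apply (F : κ → ι → ℝ) :
    ∑ c : κ → ι, (∏ j, p (c j)) * ∏ j, F j (c j) = ∏ j, ∑ i, p i * F j i := by
  simp_rw [Fintype.prod_sum, prod_mul_distrib]

theorem sum_prod_mul_apply (hp : ∑ i, p i = 1) (k : κ) (f : ι → ℝ) :
    ∑ c : κ → ι, (∏ j, p (c j)) * f (c k) = ∑ i, p i * f i := by
  have h := sum_prod_mul_prod_apply (p := p) fun j i ↦ if j = k then f i else 1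
  have hfactor (j : κ) :
      ∑ i, p i * (if j = k then f i else 1) = if j = k then ∑ i, p i * f i else 1 := by
    split_ifs <;> simp [hp]
  simpa only [prod_ite_eq', mem_univ, if_true, hfactor] using h

theorem sum_prod_mul_apply_mul_apply (hp : ∑ i, p i = 1) {k l : κ} (hkl : k ≠ l)
    (f g : ι → ℝ) :
    ∑ c : κ → ι, (∏ j, p (c j)) * (f (c k) * g (c l)) =
      (∑ i, p i * f i) * ∑ i, p i * g i := by
  have h := sum_prod_mul_prod_apply (p := p) fun j i ↦
    (if j = k then f i else 1) * (if j = l then g i else 1)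
  have hfactor (j : κ) :
      ∑ i, p i * ((if j = k then f i else 1) * (if j = l then g i else 1)) =
        (if j = k then ∑ i, p i * f i else 1) * (if j = l then ∑ i, p i * g i else 1) := by
    by_cases hjk : j = k <;> by_cases hjl : j = l <;> simp_all
  simpa only [prod_mul_distrib, prod_ite_eq', mem_univ, if_true, hfactor] using h

theorem sum_prod_mul_sum_apply_sq (hp : ∑ i, p i = 1) (g : ι → ℝ)
    (hg : ∑ i, p i * g i = 0) :
    ∑ c : κ → ι, (∏ j, p (c j)) * (∑ k, g (c k)) ^ 2 =
      Fintype.card κ * ∑ i, p i * g i ^ 2 := by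
  have hpair (k l : κ) :
      ∑ c : κ → ι, (∏ j, p (c j)) * (g (c k) * g (c l)) =
        if k = l then ∑ i, p i * g i ^ 2 else 0 := by
    split_ifs with hkl
    · subst hkl
      simpa only [sq] using sum_prod_mul_apply hp k fun i ↦ g i * g i
    · rw [sum_prod_mul_apply_mul_apply hp hkl, hg, zero_mul]
  calc ∑ c : κ → ι, (∏ j, p (c j)) * (∑ k, g (c k)) ^ 2
      = ∑ k, ∑ l, ∑ c : κ → ι, (∏ j, p (c j)) * (g (c k) * g (c l)) := by
        simp_rw [sq, sum_mul_sum, mul_sum]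
        rw [sum_comm]
        exact sum_congr rfl fun _ _ ↦ sum_comm
    _ = Fintype.card κ * ∑ i, p i * g i ^ 2 := by
        simp [hpair, sum_ite_eq]

end IidDraws

theorem sum_mul_sub_sq_eq {ι : Type*} [Fintype ι] {p : ι → ℝ} (hp : ∑ i, p i = 1)
    (z : ι → ℝ) :
    ∑ i, p i * (∑ j, p j * z j - z i) ^ 2 = ∑ i, p i * z i ^ 2 - (∑ j, p j * z j) ^ 2 := by
  set t := ∑ j, p j * z j with ht
  calc ∑ i, p i * (t - z i) ^ 2 = ∑ i, (t ^ 2 * p i - 2 * t * (p i * z i) + p i * z i ^ 2) :=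
        sum_congr rfl fun i _ ↦ by ring
    _ = t ^ 2 * ∑ i, p i - 2 * t * t + ∑ i, p i * z i ^ 2 := by
        rw [sum_add_distrib, sum_sub_distrib, ← mul_sum, ← mul_sum, ← ht]
    _ = _ := by rw [hp]; ring

section SubSampling

variable {m n q d : ℕ} (B : Matrix (Fin m) (Fin n) ℝ) (V : Matrix (Fin n) (Fin q) ℝ)
  {p : Fin n → ℝ}

theorem mul_subSampleMatrix_mul_transpose_mul_apply (hp : ∀ i, 0 ≤ p i)
    (c : Fin d → Fin n) (a : Fin m) (b : Fin q) :
    (B * subSampleMatrix n d p c * (subSampleMatrix n d p c)ᵀ * V) a b =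
      ∑ k, B a (c k) * V (c k) b / (d * p (c k)) := by
  rw [Matrix.mul_assoc (B * _), Matrix.mul_apply]
  refine sum_congr rfl fun k _ ↦ ?_
  have hscale : 1 / √(d * p (c k)) * (1 / √(d * p (c k))) = 1 / (d * p (c k)) := by
    rw [one_div_mul_one_div, Real.mul_self_sqrt (mul_nonneg d.cast_nonneg (hp _))]
  simp only [Matrix.mul_apply, Matrix.transpose_apply, subSampleMatrix, mul_ite, ite_mul,
    mul_zero, zero_mul, sum_ite_eq, mem_univ, if_true]
  linear_combination B a (c k) * V (c k) b * hscale

theorem sum_mul_mul_div_mul_eq_mul_apply_div (hp : ∀ i, p i ≠ 0) (a : Fin m) (b : Fin q) :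
    ∑ i, p i * (B a i * V i b / (d * p i)) = (B * V) a b / d := by
  rw [Matrix.mul_apply, sum_div]
  refine sum_congr rfl fun i _ ↦ ?_
  rcases eq_or_ne (d : ℝ) 0 with hd | hd
  · simp [hd]
  · field_simp [hp i]

theorem sub_mul_subSampleMatrix_apply (hd : 0 < d) (hp : ∀ i, 0 < p i)
    (c : Fin d → Fin n) (a : Fin m) (b : Fin q) :
    (B * V - B * subSampleMatrix n d p c * (subSampleMatrix n d p c)ᵀ * V) a b =
      ∑ k, (∑ i, p i * (B a i * V i b / (d * p i)) -
        B a (c k) * V (c k) b / (d * p (c k))) := by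
  have hd' : (d : ℝ) ≠ 0 := by positivity
  rw [Matrix.sub_apply, mul_subSampleMatrix_mul_transpose_mul_apply B V fun i ↦ (hp i).le,
    sum_sub_distrib, sum_const, card_univ, Fintype.card_fin, nsmul_eq_mul,
    sum_mul_mul_div_mul_eq_mul_apply_div B V fun i ↦ (hp i).ne']
  field_simp

theorem expected_sq_sub_mul_subSampleMatrix_apply (hd : 0 < d) (hp : ∀ i, 0 < p i)
    (hsum : ∑ i, p i = 1) (a : Fin m) (b : Fin q) :
    ∑ c : Fin d → Fin n, (∏ k, p (c k)) *
        (B * V - B * subSampleMatrix n d p c * (subSampleMatrix n d p c)ᵀ * V) a b ^ 2 =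
      (∑ i, B a i ^ 2 * V i b ^ 2 / p i - (B * V) a b ^ 2) / d := by
  have hd' : (d : ℝ) ≠ 0 := by positivity
  set X : Fin n → ℝ := fun i ↦ B a i * V i b / (d * p i)
  have hmean : ∑ i, p i * X i = (B * V) a b / d :=
    sum_mul_mul_div_mul_eq_mul_apply_div B V (fun i ↦ (hp i).ne') a b
  have hcentred : ∑ i, p i * (∑ j, p j * X j - X i) = 0 := by
    simp only [mul_sub, sum_sub_distrib, ← sum_mul, hsum, one_mul, sub_self]
  have hsecond : d * ∑ i, p i * X i ^ 2 = ∑ i, B a i ^ 2 * V i b ^ 2 / p i / d := by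
    rw [mul_sum]
    exact sum_congr rfl fun i _ ↦ by simp only [X]; field_simp [(hp i).ne']
  simp_rw [sub_mul_subSampleMatrix_apply B V hd hp]
  rw [sum_prod_mul_sum_apply_sq hsum (fun i ↦ ∑ j, p j * X j - X i) hcentred,
    sum_mul_sub_sq_eq hsum, Fintype.card_fin, mul_sub, hsecond, hmean, ← sum_div]
  field_simp

theorem expected_frobSq_sub_mul_subSampleMatrix (hd : 0 < d) (hp : ∀ i, 0 < p i)
    (hsum : ∑ i, p i = 1) :
    ∑ c : Fin d → Fin n, (∏ k, p (c k)) *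
        frobSq (B * V - B * subSampleMatrix n d p c * (subSampleMatrix n d p c)ᵀ * V) =
      (∑ i, (∑ a, B a i ^ 2) * (∑ b, V i b ^ 2) / p i - frobSq (B * V)) / d := by
  have hrows : ∑ a, ∑ b, ∑ i, B a i ^ 2 * V i b ^ 2 / p i =
      ∑ i, (∑ a, B a i ^ 2) * (∑ b, V i b ^ 2) / p i := by
    simp_rw [sum_mul_sum, sum_div]
    calc _ = ∑ a, ∑ i, ∑ b, B a i ^ 2 * V i b ^ 2 / p i := sum_congr rfl fun _ _ ↦ sum_comm
      _ = _ := sum_comm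
  calc _ = ∑ a, ∑ b, ∑ c : Fin d → Fin n, (∏ k, p (c k)) *
        (B * V - B * subSampleMatrix n d p c * (subSampleMatrix n d p c)ᵀ * V) a b ^ 2 := by
        simp only [frobSq, mul_sum]
        rw [sum_comm]
        exact sum_congr rfl fun _ _ ↦ sum_comm
    _ = ∑ a, ∑ b, (∑ i, B a i ^ 2 * V i b ^ 2 / p i - (B * V) a b ^ 2) / d :=
        sum_congr rfl fun a _ ↦ sum_congr rfl fun b _ ↦
          expected_sq_sub_mul_subSampleMatrix_apply B V hd hp hsum a b
    _ = _ := by simp only [← sum_div, sum_sub_distrib, hrows, frobSq]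

end SubSampling

theorem sum_sq_div_le_sq_sum_div {ι : Type*} [Fintype ι] {s p : ι → ℝ} {β : ℝ}
    (hs : ∀ i, 0 ≤ s i) (hp : ∀ i, 0 < p i) (hβ : 0 < β)
    (hquality : ∀ i, β * s i / ∑ j, s j ≤ p i) :
    ∑ i, s i ^ 2 / p i ≤ (∑ i, s i) ^ 2 / β := by
  set T := ∑ j, s j
  have hterm (i : ι) : s i ^ 2 / p i ≤ s i * T / β := by
    have hsT : s i ≤ T := single_le_sum (fun j _ ↦ hs j) (mem_univ i)
    rcases (hs i).eq_or_lt with hzero | hpos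
    · simp [← hzero]
    have hT : 0 < T := hpos.trans_le hsT
    have hβs : β * s i ≤ p i * T := (div_le_iff₀ hT).mp (hquality i)
    rw [div_le_div_iff₀ (hp i) hβ]
    nlinarith
  calc ∑ i, s i ^ 2 / p i ≤ ∑ i, s i * T / β := sum_le_sum fun i _ ↦ hterm i
    _ = T ^ 2 / β := by rw [← sum_div, ← sum_mul, sq]

theorem sum_sqrt_mul_sqrt_sq_le_frobSq_mul {m n q : ℕ} (B : Matrix (Fin m) (Fin n) ℝ)
    (V : Matrix (Fin n) (Fin q) ℝ) :
    (∑ i, √(∑ a, B a i ^ 2) * √(∑ b, V i b ^ 2)) ^ 2 ≤ frobSq B * frobSq V := by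
  have h := sum_mul_sq_le_sq_mul_sq univ (fun i ↦ √(∑ a, B a i ^ 2)) fun i ↦ √(∑ b, V i b ^ 2)
  simp_rw [Real.sq_sqrt (sum_nonneg fun _ _ ↦ sq_nonneg _)] at h
  rwa [sum_comm] at h

theorem expected_frobenius_error_bound_general (m n q d : ℕ) (hd : 0 < d)
    (B : Matrix (Fin m) (Fin n) ℝ) (V : Matrix (Fin n) (Fin q) ℝ)
    (β : ℝ) (hβ0 : 0 < β)
    (p : Fin n → ℝ) (hp : ∀ i, 0 < p i) (hsum : ∑ i, p i = 1)
    (hquality : ∀ i, p i ≥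
      β * (Real.sqrt (∑ a, (B a i) ^ 2) * Real.sqrt (∑ b, (V i b) ^ 2)) /
        (∑ i', Real.sqrt (∑ a, (B a i') ^ 2) * Real.sqrt (∑ b, (V i' b) ^ 2))) :
    (∑ c : Fin d → Fin n, (∏ k, p (c k)) *
        frobSq (B * V - B * subSampleMatrix n d p c * (subSampleMatrix n d p c)ᵀ * V))
      ≤ (1 / (β * d)) * frobSq B * frobSq V := by
  set s : Fin n → ℝ := fun i ↦ √(∑ a, B a i ^ 2) * √(∑ b, V i b ^ 2)
  have hs_sq (i : Fin n) : s i ^ 2 = (∑ a, B a i ^ 2) * ∑ b, V i b ^ 2 := by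
    simp only [s, mul_pow, Real.sq_sqrt (sum_nonneg fun _ _ ↦ sq_nonneg _)]
  have hfrob : 0 ≤ frobSq (B * V) := sum_nonneg fun _ _ ↦ sum_nonneg fun _ _ ↦ sq_nonneg _
  rw [expected_frobSq_sub_mul_subSampleMatrix B V hd hp hsum]
  calc _ ≤ (∑ i, s i ^ 2 / p i) / d := by simp only [hs_sq]; gcongr; linarith
    _ ≤ (∑ i, s i) ^ 2 / β / d := by
        gcongr
        exact sum_sq_div_le_sq_sum_div (fun i ↦ by positivity) hp hβ0 hquality
    _ ≤ frobSq B * frobSq V / β / d := by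
        gcongr
        exact sum_sqrt_mul_sqrt_sq_le_frobSq_mul B V
    _ = 1 / (β * d) * frobSq B * frobSq V := by ring

/-- If the sub-sampling probabilities satisfy
`pᵢ ≥ β ‖B^{(i)}‖‖V_{(i)}‖ / ∑_{i'} ‖B^{(i')}‖‖V_{(i')}‖` for a quality coefficient
`β ∈ (0,1]`, then `E[‖BV − B S Sᵀ V‖_F²] ≤ (1/(β d)) ‖B‖_F² ‖V‖_F²`. -/
theorem expected_frobenius_error_bound (m n q d : ℕ) (hd : 0 < d)
    (B : Matrix (Fin m) (Fin n) ℝ) (V : Matrix (Fin n) (Fin q) ℝ)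
    (β : ℝ) (hβ0 : 0 < β) (hβ1 : β ≤ 1)
    (hpos : ∀ i : Fin n,
      0 < Real.sqrt (∑ a, (B a i) ^ 2) * Real.sqrt (∑ b, (V i b) ^ 2))
    (p : Fin n → ℝ) (hp : ∀ i, 0 < p i) (hsum : ∑ i, p i = 1)
    (hquality : ∀ i, p i ≥
      β * (Real.sqrt (∑ a, (B a i) ^ 2) * Real.sqrt (∑ b, (V i b) ^ 2)) /
        (∑ i', Real.sqrt (∑ a, (B a i') ^ 2) * Real.sqrt (∑ b, (V i' b) ^ 2))) :
    (∑ c : Fin d → Fin n, (∏ k, p (c k)) *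
        frobSq (B * V - B * subSampleMatrix n d p c * (subSampleMatrix n d p c)ᵀ * V))
      ≤ (1 / (β * d)) * frobSq B * frobSq V :=
  expected_frobenius_error_bound_general m n q d hd B V β hβ0 p hp hsum hquality
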